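/- For any δ > 0 there exists c = c(δ) > 0 such that the following holds. For any ε ∈ (0,c), any simple graph G = (V,E) on n ≥ ε⁻² vertices with minimal degree at least δn, any U ⊆ V with |U| ≥ ε√n, and any vertex v of G, the simple random walk X on G started at v satisfies P_v(X[0, 2(t_mix^G(ε/2) + ⌊√n⌋)] ∩ U = ∅) ≤ 1 − εδ/4. -/

import Mathlib

open scoped Classical

noncomputable section

namespace Paper

variable {V : Type} [Fintype V]

/-- The degree of a vertex `v` in a simple graph `G`. -/
def deg (G : SimpleGraph V) (v : V) : ℕ := Nat.card {u | G.Adj v u}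

/-- The transition matrix of the simple random walk on `G`. -/
def transMat (G : SimpleGraph V) : Matrix V V ℝ :=
  fun v u => if G.Adj v u then (deg G v : ℝ)⁻¹ else 0

/-- The transition matrix `Q = (I + P)/2` of the lazy random walk on `G`. -/
def lazyMat [DecidableEq V] (G : SimpleGraph V) : Matrix V V ℝ :=
  (2 : ℝ)⁻¹ • ((1 : Matrix V V ℝ) + transMat G)

/-- Total variation distance between two measures on `V`. -/
def dTV (μ ν : V → ℝ) : ℝ := (∑ u, |μ u - ν u|) / 2

/-- The stationary distribution `π(v) = deg(v)/2|E|` of the random walk on `G`. -/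
def statDist (G : SimpleGraph V) (v : V) : ℝ := (deg G v : ℝ) / ∑ u, (deg G u : ℝ)

/-- The `ε`-mixing time of the lazy random walk on `G`. -/
def tmix [DecidableEq V] (G : SimpleGraph V) (ε : ℝ) : ℕ :=
  Finset.univ.sup fun v : V =>
    sInf {t : ℕ | dTV (fun u => (lazyMat G ^ t) v u) (statDist G) < ε}

/-- The transition matrix of the simple random walk on `G` killed on the set `U`. -/
def killedMat (G : SimpleGraph V) (U : Finset V) : Matrix V V ℝ :=
  fun u w => if u ∉ U ∧ w ∉ U then transMat G u w else 0

/-- `P_v(X[0,T] ∩ U = ∅)`: the probability that the simple random walk on `G` started at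
`v` avoids `U` during its first `T` steps (positions `X_0, …, X_T`). -/
def avoidProb (G : SimpleGraph V) (U : Finset V) (v : V) (T : ℕ) : ℝ :=
  if v ∈ U then 0 else ∑ u, (killedMat G U ^ T) v u

/-!
Choose `W ⊆ U` with `|W| = ⌈ε√n⌉` and put `m = ⌊√n⌋`, `t = t_mix(ε/2)`. Killed on `W`, the simple
walk run for `2(t + m)` steps survives at most as well as the lazy walk run for `t + m` steps, and
after `t` lazy steps the walk is `ε`-close to the stationary distribution `π` (connectivity gives
a Doeblin minorization, so the mixing time is attained). So it suffices that the lazy walk started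
from `π` hits `W` within `m` steps with probability `≥ εδ/3`. Started from `π` it makes
`(m + 1) π(W) ≥ εδ` visits to `W` in expectation; started inside `W` it makes at most
`2 + 4ε/δ ≤ 3` of them, because minimal degree `δn` means that a step of the simple walk lands on
any given vertex with probability at most `1/(δn)`. Splitting the visits at the first entrance
into `W` gives the bound.
-/

open Matrix Finset

/-- With `D` the projection off a set `W`, the `i`-th term collects the paths that enter `W` for
the first time at time `i`. -/
theorem pow_eq_sum_firstEntrance {R : Type*} [Ring R] (Q D : R) (j : ℕ) :
    Q ^ j = ∑ i ∈ range (j + 1), (D * Q) ^ i * (1 - D) * Q ^ (j - i) + (D * Q) ^ j * D := by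
  induction j with
  | zero => simp
  | succ j ih =>
    have hsum : ∑ i ∈ range (j + 1), (D * Q) ^ i * (1 - D) * Q ^ (j - i) * Q =
        ∑ i ∈ range (j + 1), (D * Q) ^ i * (1 - D) * Q ^ (j + 1 - i) :=
      sum_congr rfl fun i hi => by
        rw [Nat.sub_add_comm (Nat.lt_succ_iff.mp (mem_range.mp hi)), pow_succ, mul_assoc _ _ Q]
    rw [pow_succ, ih, add_mul, sum_mul, hsum, sum_range_succ _ (j + 1), Nat.sub_self,
      add_assoc, pow_succ (D * Q) j, mul_assoc _ D Q]
    noncomm_ring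

section NonnegMatrix

variable {A B : Matrix V V ℝ} {x y : V → ℝ}

lemma mulVec_nonneg (hA : ∀ i j, 0 ≤ A i j) (hx : 0 ≤ x) : 0 ≤ A *ᵥ x :=
  fun i => sum_nonneg fun j _ => mul_nonneg (hA i j) (hx j)

lemma vecMul_nonneg (hx : 0 ≤ x) (hA : ∀ i j, 0 ≤ A i j) : 0 ≤ x ᵥ* A :=
  fun j => sum_nonneg fun i _ => mul_nonneg (hx i) (hA i j)

lemma mulVec_le_mulVec_of_le (hA : ∀ i j, 0 ≤ A i j) (hAB : ∀ i j, A i j ≤ B i j)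
    (hx : 0 ≤ x) (hxy : x ≤ y) : A *ᵥ x ≤ B *ᵥ y :=
  fun i => sum_le_sum fun j _ => mul_le_mul (hAB i j) (hxy j) (hx j) ((hA i j).trans (hAB i j))

lemma sum_abs_vecMul_le {b : ℝ} (hA : ∀ i j, 0 ≤ A i j) (hAb : ∀ i, ∑ j, A i j ≤ b)
    (x : V → ℝ) : ∑ u, |(x ᵥ* A) u| ≤ b * ∑ w, |x w| :=
  calc ∑ u, |(x ᵥ* A) u| ≤ ∑ u, ∑ w, |x w| * A w u :=
        sum_le_sum fun u _ => (abs_sum_le_sum_abs _ _).trans_eq <|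
          sum_congr rfl fun w _ => by rw [abs_mul, abs_of_nonneg (hA w u)]
    _ = ∑ w, |x w| * ∑ u, A w u := by rw [sum_comm]; simp only [mul_sum]
    _ ≤ ∑ w, |x w| * b := sum_le_sum fun w _ => mul_le_mul_of_nonneg_left (hAb w) (abs_nonneg _)
    _ = b * ∑ w, |x w| := by rw [← sum_mul, mul_comm]

end NonnegMatrix

section Graph

variable {G : SimpleGraph V} {δ : ℝ}

lemma deg_eq_card_filter (G : SimpleGraph V) (v : V) :
    deg G v = (univ.filter (G.Adj v)).card := by
  rw [deg, Nat.card_eq_fintype_card, Fintype.card_subtype]; rfl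

lemma deg_le_card (G : SimpleGraph V) (v : V) : deg G v ≤ Fintype.card V := by
  rw [deg_eq_card_filter, ← card_univ]; exact card_filter_le _ _

lemma deg_pos [Nonempty V] (hδ : 0 < δ) (hdeg : ∀ v, δ * Fintype.card V ≤ deg G v) (v : V) :
    0 < deg G v := by
  have hn : (0 : ℝ) < Fintype.card V := by exact_mod_cast Fintype.card_pos
  exact_mod_cast (mul_pos hδ hn).trans_le (hdeg v)

lemma sum_deg_le (G : SimpleGraph V) :
    ∑ u, (deg G u : ℝ) ≤ Fintype.card V * Fintype.card V := by
  simpa using sum_le_card_nsmul univ (fun u => (deg G u : ℝ)) _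
    fun u _ => (Nat.cast_le.mpr (deg_le_card G u))

lemma le_sum_deg (hdeg : ∀ v, δ * Fintype.card V ≤ deg G v) :
    δ * Fintype.card V * Fintype.card V ≤ ∑ u, (deg G u : ℝ) := by
  simpa [mul_comm] using card_nsmul_le_sum univ (fun u => (deg G u : ℝ)) _ fun u _ => hdeg u

lemma statDist_nonneg : 0 ≤ statDist G := fun w => by unfold statDist; positivity

lemma sum_statDist [Nonempty V] (hd : ∀ v, 0 < deg G v) : ∑ w, statDist G w = 1 := by
  have : 0 < ∑ u, (deg G u : ℝ) := sum_pos (fun u _ => by exact_mod_cast hd u) univ_nonempty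
  simp only [statDist, ← sum_div, div_self this.ne']

lemma le_statDist [Nonempty V] (hδ : 0 < δ) (hdeg : ∀ v, δ * Fintype.card V ≤ deg G v)
    (w : V) : δ / Fintype.card V ≤ statDist G w := by
  have hn : (0 : ℝ) < Fintype.card V := by exact_mod_cast Fintype.card_pos
  calc δ / Fintype.card V = δ * Fintype.card V / (Fintype.card V * Fintype.card V) := by
        field_simp
    _ ≤ statDist G w :=
        div_le_div₀ (by positivity) (hdeg w)
          ((mul_pos (mul_pos hδ hn) hn).trans_le (le_sum_deg hdeg)) (sum_deg_le G)

lemma statDist_le [Nonempty V] (hδ : 0 < δ) (hdeg : ∀ v, δ * Fintype.card V ≤ deg G v)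
    (w : V) : statDist G w ≤ (δ * Fintype.card V)⁻¹ := by
  have hn : (0 : ℝ) < Fintype.card V := by exact_mod_cast Fintype.card_pos
  calc statDist G w ≤ Fintype.card V / (δ * Fintype.card V * Fintype.card V) :=
        div_le_div₀ hn.le (Nat.cast_le.mpr (deg_le_card G w)) (by positivity) (le_sum_deg hdeg)
    _ = (δ * Fintype.card V)⁻¹ := by field_simp

lemma statDist_vecMul_transMat (hd : ∀ v, 0 < deg G v) :
    statDist G ᵥ* transMat G = statDist G := by
  ext u
  have hterm : ∀ w, statDist G w * transMat G w u =
      if G.Adj u w then (∑ x, (deg G x : ℝ))⁻¹ else 0 := fun w => by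
    have : (deg G w : ℝ) ≠ 0 := by exact_mod_cast (hd w).ne'
    simp only [statDist, transMat, G.adj_comm u w]
    split_ifs
    · field_simp
    · simp
  simp only [vecMul, dotProduct, hterm]
  rw [← sum_filter, sum_const, ← deg_eq_card_filter, nsmul_eq_mul, statDist, div_eq_mul_inv]

end Graph

lemma dTV_nonneg (μ ν : V → ℝ) : 0 ≤ dTV μ ν := by
  unfold dTV; positivity

lemma one_le_mul_sqrt {ε : ℝ} (hε : 0 < ε) {n : ℝ} (hn : ε⁻¹ ^ 2 ≤ n) : 1 ≤ ε * √n :=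
  calc 1 = ε * ε⁻¹ := (mul_inv_cancel₀ hε.ne').symm
    _ ≤ ε * √n := by gcongr; exact Real.le_sqrt_of_sq_le hn

lemma nat_sqrt_add_one_mul_le [Nonempty V] {W : Finset V} {δ ε : ℝ} (hδ : 0 < δ) (hε : 0 < ε)
    (hn : ε⁻¹ ^ 2 ≤ (Fintype.card V : ℝ)) (hW : W.card = ⌈ε * √(Fintype.card V)⌉₊) :
    (Nat.sqrt (Fintype.card V) + 1) * (W.card * (δ * Fintype.card V)⁻¹) ≤ 4 * ε / δ := by
  set s := √(Fintype.card V : ℝ)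
  have hss : s * s = Fintype.card V := Real.mul_self_sqrt (Nat.cast_nonneg _)
  have hs1 : 1 ≤ s := Real.one_le_sqrt.mpr (Nat.one_le_cast.mpr Fintype.card_pos)
  have hk : (W.card : ℝ) ≤ 2 * (ε * s) := by
    rw [hW]; exact Nat.ceil_le_two_mul (by linarith [one_le_mul_sqrt hε hn])
  calc _ ≤ (2 * s) * (2 * (ε * s) * (δ * (s * s))⁻¹) := by
        rw [hss]; gcongr; linarith [Real.nat_sqrt_le_real_sqrt (a := Fintype.card V)]
    _ = 4 * ε / δ := by field_simp; ring

variable [DecidableEq V]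

lemma pow_apply_le_pow_apply {A B : Matrix V V ℝ} (hA : ∀ i j, 0 ≤ A i j)
    (hAB : ∀ i j, A i j ≤ B i j) (t : ℕ) : ∀ i j, (A ^ t) i j ≤ (B ^ t) i j := by
  have hB : ∀ i j, 0 ≤ B i j := fun i j => (hA i j).trans (hAB i j)
  induction t with
  | zero => exact fun _ _ => le_rfl
  | succ t ih =>
    intro i j
    rw [pow_succ, pow_succ, mul_apply, mul_apply]
    exact sum_le_sum fun k _ => mul_le_mul (ih i k) (hAB k j) (hA k j) (pow_apply_nonneg hB t i k)

lemma lazy_mem_rowStochastic {P : Matrix V V ℝ} (hP : P ∈ rowStochastic ℝ V) :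
    (2 : ℝ)⁻¹ • (1 + P) ∈ rowStochastic ℝ V := by
  rw [smul_add]
  exact convex_rowStochastic (one_mem _) hP (by norm_num) (by norm_num) (by norm_num)

def indicatorVec (W : Finset V) : V → ℝ := fun v => if v ∈ W then 1 else 0

omit [Fintype V] in
lemma indicatorVec_nonneg (W : Finset V) : 0 ≤ indicatorVec W := fun v => by
  unfold indicatorVec; split_ifs <;> norm_num

omit [Fintype V] in
lemma indicatorVec_le_one (W : Finset V) : indicatorVec W ≤ 1 := fun v => by
  unfold indicatorVec; split_ifs <;> norm_num

lemma dotProduct_indicatorVec (x : V → ℝ) (W : Finset V) :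
    x ⬝ᵥ indicatorVec W = ∑ w ∈ W, x w := by
  simp [dotProduct, indicatorVec]

lemma dotProduct_le_dotProduct_add_of_le_off {π μ h : V → ℝ} {W : Finset V} {η : ℝ}
    (hπ0 : 0 ≤ π) (hμ0 : 0 ≤ μ) (h0 : 0 ≤ h) (h1 : h ≤ 1) (hη0 : 0 ≤ η)
    (hη : ∀ w ∉ W, h w ≤ η) :
    π ⬝ᵥ h ≤ μ ⬝ᵥ h + π ⬝ᵥ indicatorVec W + η * ∑ w, |μ w - π w| := by
  simp only [dotProduct, mul_sum, ← sum_add_distrib]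
  refine sum_le_sum fun w _ => ?_
  have hπw : 0 ≤ π w := hπ0 w
  have hμw : 0 ≤ μ w := hμ0 w
  have hw0 : 0 ≤ h w := h0 w
  have hw1 : h w ≤ 1 := h1 w
  have habs : 0 ≤ η * |μ w - π w| := mul_nonneg hη0 (abs_nonneg _)
  rw [indicatorVec]
  split_ifs with hw
  · nlinarith
  · have h1 := mul_le_mul_of_nonneg_right ((le_abs_self _).trans_eq (abs_sub_comm (π w) (μ w))) hw0
    have h2 := mul_le_mul_of_nonneg_left (hη w hw) (abs_nonneg (μ w - π w))
    nlinarith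

def avoidProj (W : Finset V) : Matrix V V ℝ := diagonal (indicatorVec Wᶜ)

section Avoid

variable {W U : Finset V} {A P : Matrix V V ℝ}

lemma avoidProj_mul_self (W : Finset V) : avoidProj W * avoidProj W = avoidProj W := by
  rw [avoidProj, diagonal_mul_diagonal]
  congr 1; ext v
  unfold indicatorVec; split_ifs <;> norm_num

lemma one_sub_avoidProj (W : Finset V) : 1 - avoidProj W = diagonal (indicatorVec W) := by
  rw [avoidProj, ← diagonal_one, diagonal_sub]
  congr 1; ext v
  simp only [indicatorVec, mem_compl]; split_ifs <;> norm_num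

lemma avoidProj_mulVec_one (W : Finset V) : avoidProj W *ᵥ 1 = indicatorVec Wᶜ := by
  ext v; rw [avoidProj, mulVec_diagonal, Pi.one_apply, mul_one]

lemma avoidProj_mulVec_indicatorVec (W : Finset V) : avoidProj W *ᵥ indicatorVec W = 0 := by
  ext v; rw [avoidProj, mulVec_diagonal, indicatorVec, indicatorVec]
  split_ifs <;> simp_all

lemma avoidProj_mul_apply (A : Matrix V V ℝ) (i j : V) :
    (avoidProj W * A) i j = if i ∈ W then 0 else A i j := by
  rw [avoidProj, diagonal_mul, indicatorVec]
  split_ifs <;> simp_all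

lemma avoidProj_mul_apply_nonneg (hA : ∀ i j, 0 ≤ A i j) (i j : V) :
    0 ≤ (avoidProj W * A) i j := by
  rw [avoidProj_mul_apply]; split_ifs
  exacts [le_rfl, hA i j]

lemma avoidProj_mul_apply_le_of_subset (hA : ∀ i j, 0 ≤ A i j) (hWU : W ⊆ U) (i j : V) :
    (avoidProj U * A) i j ≤ (avoidProj W * A) i j := by
  rw [avoidProj_mul_apply, avoidProj_mul_apply]
  split_ifs with hU hW hW
  exacts [le_rfl, hA i j, absurd (hWU hW) hU, le_rfl]

lemma avoidProj_mul_apply_le (hA : ∀ i j, 0 ≤ A i j) (i j : V) :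
    (avoidProj W * A) i j ≤ A i j := by
  rw [avoidProj_mul_apply]; split_ifs
  exacts [hA i j, le_rfl]

/-- `avoidVec A W m v` is the probability that the Markov chain with transition matrix `A`
started at `v` stays outside `W` at all times `0, …, m`. -/
def avoidVec (A : Matrix V V ℝ) (W : Finset V) (m : ℕ) : V → ℝ :=
  (avoidProj W * A) ^ m *ᵥ indicatorVec Wᶜ

lemma avoidVec_zero (A : Matrix V V ℝ) (W : Finset V) : avoidVec A W 0 = indicatorVec Wᶜ := by
  simp [avoidVec]

lemma avoidVec_succ (A : Matrix V V ℝ) (W : Finset V) (m : ℕ) :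
    avoidVec A W (m + 1) = (avoidProj W * A) *ᵥ avoidVec A W m := by
  rw [avoidVec, avoidVec, pow_succ', mulVec_mulVec]

lemma avoidVec_add (A : Matrix V V ℝ) (W : Finset V) (s m : ℕ) :
    avoidVec A W (s + m) = (avoidProj W * A) ^ s *ᵥ avoidVec A W m := by
  rw [avoidVec, avoidVec, pow_add, mulVec_mulVec]

lemma avoidProj_mulVec_avoidVec (A : Matrix V V ℝ) (W : Finset V) (m : ℕ) :
    avoidProj W *ᵥ avoidVec A W m = avoidVec A W m := by
  cases m with
  | zero => rw [avoidVec_zero, ← avoidProj_mulVec_one, mulVec_mulVec, avoidProj_mul_self]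
  | succ m => rw [avoidVec_succ, mulVec_mulVec, ← mul_assoc, avoidProj_mul_self]

lemma avoidVec_nonneg (hA : ∀ i j, 0 ≤ A i j) (m : ℕ) : 0 ≤ avoidVec A W m := by
  induction m with
  | zero => rw [avoidVec_zero]; exact indicatorVec_nonneg _
  | succ m ih => rw [avoidVec_succ]; exact mulVec_nonneg (avoidProj_mul_apply_nonneg hA) ih

lemma avoidVec_succ_le (hA : A ∈ rowStochastic ℝ V) (m : ℕ) :
    avoidVec A W (m + 1) ≤ avoidVec A W m := by
  have hA0 : ∀ i j, 0 ≤ A i j := fun i j => nonneg_of_mem_rowStochastic hA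
  induction m with
  | zero =>
    intro v
    have hle : (A *ᵥ indicatorVec Wᶜ) v ≤ 1 :=
      calc (A *ᵥ indicatorVec Wᶜ) v ≤ (A *ᵥ 1) v :=
            mulVec_le_mulVec_of_le hA0 (fun _ _ => le_rfl) (indicatorVec_nonneg _)
              (indicatorVec_le_one _) v
        _ = 1 := congr_fun (one_vecMul_of_mem_rowStochastic hA) v
    rw [avoidVec_succ, avoidVec_zero, ← mulVec_mulVec, avoidProj, mulVec_diagonal]
    exact mul_le_of_le_one_right (indicatorVec_nonneg _ v) hle
  | succ m ih =>
    have := mulVec_le_mulVec_of_le (avoidProj_mul_apply_nonneg (W := W) hA0) (fun _ _ => le_rfl)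
      (avoidVec_nonneg hA0 (m + 1)) ih
    rwa [← avoidVec_succ, ← avoidVec_succ] at this

lemma avoidVec_antitone (hA : A ∈ rowStochastic ℝ V) : Antitone (avoidVec A W) :=
  antitone_nat_of_succ_le (avoidVec_succ_le hA)

lemma avoidVec_le_one (hA : A ∈ rowStochastic ℝ V) (m : ℕ) : avoidVec A W m ≤ 1 := fun v =>
  (avoidVec_antitone hA (Nat.zero_le m) v).trans
    (by rw [avoidVec_zero]; exact indicatorVec_le_one _ v)

lemma avoidVec_le_of_subset (hA : ∀ i j, 0 ≤ A i j) (hWU : W ⊆ U) (m : ℕ) :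
    avoidVec A U m ≤ avoidVec A W m := by
  induction m with
  | zero =>
    intro v
    have := @hWU v
    by_cases hU : v ∈ U <;> by_cases hW : v ∈ W <;> simp_all [avoidVec_zero, indicatorVec]
  | succ m ih =>
    rw [avoidVec_succ, avoidVec_succ]
    exact mulVec_le_mulVec_of_le (avoidProj_mul_apply_nonneg hA)
      (avoidProj_mul_apply_le_of_subset hA hWU) (avoidVec_nonneg hA m) ih

/-- A lazy step either stays put, which is harmless off `W`, or is a step of `P`; and survival is
antitone in time. -/
lemma avoidVec_le_avoidVec_lazy (hP : P ∈ rowStochastic ℝ V) (m : ℕ) :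
    avoidVec P W m ≤ avoidVec ((2 : ℝ)⁻¹ • (1 + P)) W m := by
  have hP0 : ∀ i j, 0 ≤ P i j := fun i j => nonneg_of_mem_rowStochastic hP
  have hQ0 : ∀ i j, 0 ≤ ((2 : ℝ)⁻¹ • (1 + P)) i j :=
    fun i j => nonneg_of_mem_rowStochastic (lazy_mem_rowStochastic hP)
  induction m with
  | zero => rw [avoidVec_zero, avoidVec_zero]
  | succ m ih =>
    have hstep : (avoidProj W * ((2 : ℝ)⁻¹ • (1 + P))) *ᵥ avoidVec P W m =
        (2 : ℝ)⁻¹ • (avoidVec P W m + avoidVec P W (m + 1)) := by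
      rw [Matrix.mul_smul, mul_add, mul_one, smul_mulVec, add_mulVec,
        avoidProj_mulVec_avoidVec, avoidVec_succ]
    calc avoidVec P W (m + 1)
        ≤ (2 : ℝ)⁻¹ • (avoidVec P W m + avoidVec P W (m + 1)) := fun v => by
          have := avoidVec_succ_le (W := W) hP m v
          simp only [Pi.smul_apply, Pi.add_apply, smul_eq_mul]; linarith
      _ = (avoidProj W * ((2 : ℝ)⁻¹ • (1 + P))) *ᵥ avoidVec P W m := hstep.symm
      _ ≤ avoidVec ((2 : ℝ)⁻¹ • (1 + P)) W (m + 1) := by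
          rw [avoidVec_succ]
          exact mulVec_le_mulVec_of_le (avoidProj_mul_apply_nonneg hQ0) (fun _ _ => le_rfl)
            (avoidVec_nonneg hP0 m) ih

lemma avoidVec_add_le (hA : ∀ i j, 0 ≤ A i j) (s m : ℕ) :
    avoidVec A W (s + m) ≤ A ^ s *ᵥ avoidVec A W m := by
  rw [avoidVec_add]
  exact mulVec_le_mulVec_of_le (pow_apply_nonneg (avoidProj_mul_apply_nonneg hA) s)
    (pow_apply_le_pow_apply (avoidProj_mul_apply_nonneg hA) (avoidProj_mul_apply_le hA) s)
    (avoidVec_nonneg hA m) le_rfl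

end Avoid

/-- `firstEntrance Q W i v x` is the probability that the chain started at `v` enters `W` for
the first time at time `i`, and does so at `x`. -/
def firstEntrance (Q : Matrix V V ℝ) (W : Finset V) (i : ℕ) : Matrix V V ℝ :=
  (avoidProj W * Q) ^ i * (1 - avoidProj W)

section FirstEntrance

variable {Q : Matrix V V ℝ} {W : Finset V} {π : V → ℝ}

lemma firstEntrance_apply_nonneg (hQ0 : ∀ i j, 0 ≤ Q i j) (i : ℕ) (x y : V) :
    0 ≤ firstEntrance Q W i x y := by
  rw [firstEntrance, one_sub_avoidProj, mul_diagonal]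
  exact mul_nonneg (pow_apply_nonneg (avoidProj_mul_apply_nonneg hQ0) i x y)
    (indicatorVec_nonneg W y)

lemma firstEntrance_mulVec_one (Q : Matrix V V ℝ) (W : Finset V) (i : ℕ) :
    firstEntrance Q W i *ᵥ 1 = (avoidProj W * Q) ^ i *ᵥ indicatorVec W := by
  rw [firstEntrance, ← mulVec_mulVec, one_sub_avoidProj]
  congr 1; ext v; rw [mulVec_diagonal, Pi.one_apply, mul_one]

lemma one_sub_avoidVec_eq_sum (hQ : Q ∈ rowStochastic ℝ V) (m : ℕ) :
    1 - avoidVec Q W m = ∑ i ∈ range (m + 1), firstEntrance Q W i *ᵥ 1 := by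
  have h := congrArg (· *ᵥ (1 : V → ℝ)) (pow_eq_sum_firstEntrance Q (avoidProj W) m)
  simp only [add_mulVec, sum_mulVec, ← mulVec_mulVec,
    one_vecMul_of_mem_rowStochastic (pow_mem hQ _), avoidProj_mulVec_one] at h
  conv_lhs => rw [h]
  rw [avoidVec, add_sub_cancel_right]
  simp only [firstEntrance, mulVec_mulVec]

lemma one_sub_avoidVec_le_sum (hQ : Q ∈ rowStochastic ℝ V) (m : ℕ) :
    1 - avoidVec Q W m ≤ ∑ i ∈ range (m + 1), Q ^ i *ᵥ indicatorVec W := by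
  have hQ0 : ∀ i j, 0 ≤ Q i j := fun i j => nonneg_of_mem_rowStochastic hQ
  rw [one_sub_avoidVec_eq_sum hQ]
  refine sum_le_sum fun i _ => ?_
  rw [firstEntrance_mulVec_one]
  exact mulVec_le_mulVec_of_le (pow_apply_nonneg (avoidProj_mul_apply_nonneg hQ0) i)
    (pow_apply_le_pow_apply (avoidProj_mul_apply_nonneg hQ0) (avoidProj_mul_apply_le hQ0) i)
    (indicatorVec_nonneg W) le_rfl

lemma vecMul_pow_eq_self (hπ : π ᵥ* Q = π) (j : ℕ) : π ᵥ* Q ^ j = π := by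
  induction j with
  | zero => exact vecMul_one π
  | succ j ih => rw [pow_succ, ← vecMul_vecMul, ih, hπ]

/-- `P_π(X_j ∈ W)`, split according to the time of the first entrance into `W`. -/
lemma dotProduct_indicatorVec_eq_sum (hπ : π ᵥ* Q = π) (j : ℕ) :
    π ⬝ᵥ indicatorVec W = ∑ i ∈ range (j + 1),
      (π ᵥ* firstEntrance Q W i) ⬝ᵥ (Q ^ (j - i) *ᵥ indicatorVec W) := by
  calc π ⬝ᵥ indicatorVec W = π ⬝ᵥ (Q ^ j *ᵥ indicatorVec W) := by
        rw [dotProduct_mulVec, vecMul_pow_eq_self hπ]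
    _ = _ := by
        rw [pow_eq_sum_firstEntrance Q (avoidProj W) j, add_mulVec,
          ← mulVec_mulVec (indicatorVec W) _ (avoidProj W), avoidProj_mulVec_indicatorVec,
          mulVec_zero, add_zero, sum_mulVec, dotProduct_sum]
        simp only [firstEntrance, dotProduct_mulVec, vecMul_vecMul]

lemma vecMul_firstEntrance_dotProduct_le (hQ0 : ∀ i j, 0 ≤ Q i j) (hπ0 : 0 ≤ π) {y : V → ℝ}
    {B : ℝ} (hy : ∀ x ∈ W, y x ≤ B) (i : ℕ) :
    (π ᵥ* firstEntrance Q W i) ⬝ᵥ y ≤ B * ((π ᵥ* firstEntrance Q W i) ⬝ᵥ 1) := by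
  have hyB : (1 - avoidProj W) *ᵥ y ≤ B • ((1 - avoidProj W) *ᵥ 1) := fun x => by
    rw [one_sub_avoidProj, mulVec_diagonal, Pi.smul_apply, mulVec_diagonal, indicatorVec]
    split_ifs with hx
    · simpa using hy x hx
    · simp
  calc (π ᵥ* firstEntrance Q W i) ⬝ᵥ y
      = (π ᵥ* (avoidProj W * Q) ^ i) ⬝ᵥ ((1 - avoidProj W) *ᵥ y) := by
        simp only [firstEntrance, ← vecMul_vecMul, dotProduct_mulVec]
    _ ≤ (π ᵥ* (avoidProj W * Q) ^ i) ⬝ᵥ (B • ((1 - avoidProj W) *ᵥ 1)) :=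
        dotProduct_le_dotProduct_of_nonneg_left hyB
          (vecMul_nonneg hπ0 (pow_apply_nonneg (avoidProj_mul_apply_nonneg hQ0) i))
    _ = B * ((π ᵥ* firstEntrance Q W i) ⬝ᵥ 1) := by
        simp only [dotProduct_smul, smul_eq_mul, firstEntrance, ← vecMul_vecMul,
          dotProduct_mulVec]

/-- The expected number `(m + 1) π(W)` of visits to `W` during `[0, m]` from stationarity is at
most the probability of hitting `W` times a bound on the expected visits after the first
entrance. -/
lemma mul_dotProduct_indicatorVec_le (hQ : Q ∈ rowStochastic ℝ V) (hπ0 : 0 ≤ π)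
    (hπ : π ᵥ* Q = π) {m : ℕ} {B : ℝ}
    (hB : ∀ x ∈ W, (∑ d ∈ range (m + 1), Q ^ d *ᵥ indicatorVec W) x ≤ B) :
    (m + 1) * (π ⬝ᵥ indicatorVec W) ≤ B * (π ⬝ᵥ (1 - avoidVec Q W m)) := by
  have hQ0 : ∀ i j, 0 ≤ Q i j := fun i j => nonneg_of_mem_rowStochastic hQ
  set f := fun i => π ᵥ* firstEntrance Q W i
  set N := ∑ d ∈ range (m + 1), Q ^ d *ᵥ indicatorVec W
  have hf : ∀ i, 0 ≤ f i := fun i => vecMul_nonneg hπ0 (firstEntrance_apply_nonneg hQ0 i)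
  have hfN : ∀ i, f i ⬝ᵥ N ≤ B * (f i ⬝ᵥ 1) := vecMul_firstEntrance_dotProduct_le hQ0 hπ0 hB
  calc (m + 1) * (π ⬝ᵥ indicatorVec W) = ∑ j ∈ range (m + 1), π ⬝ᵥ indicatorVec W := by
        simp
    _ = ∑ j ∈ range (m + 1), ∑ i ∈ range (j + 1), f i ⬝ᵥ (Q ^ (j - i) *ᵥ indicatorVec W) :=
        sum_congr rfl fun j _ => dotProduct_indicatorVec_eq_sum hπ j
    _ = ∑ i ∈ range (m + 1), ∑ d ∈ range (m + 1 - i), f i ⬝ᵥ (Q ^ d *ᵥ indicatorVec W) :=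
        sum_range_diag_flip (m + 1) fun i d => f i ⬝ᵥ (Q ^ d *ᵥ indicatorVec W)
    _ ≤ ∑ i ∈ range (m + 1), f i ⬝ᵥ N := by
        refine sum_le_sum fun i _ => ?_
        rw [dotProduct_sum]
        exact sum_le_sum_of_subset_of_nonneg (range_subset_range.mpr (Nat.sub_le _ _))
          fun d _ _ => dotProduct_nonneg_of_nonneg (hf i)
            (mulVec_nonneg (pow_apply_nonneg hQ0 d) (indicatorVec_nonneg W))
    _ ≤ ∑ i ∈ range (m + 1), B * (f i ⬝ᵥ 1) := sum_le_sum fun i _ => hfN i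
    _ = B * (π ⬝ᵥ (1 - avoidVec Q W m)) := by
        simp only [one_sub_avoidVec_eq_sum hQ, dotProduct_sum, mul_sum, f, dotProduct_mulVec]

end FirstEntrance

section Lazy

variable {P : Matrix V V ℝ}

/-- Until its first `P`-move (none in `d` steps has probability `2⁻ᵈ`) the lazy chain sits at
`x`; after that move the expected weight is at most `κ`. -/
lemma lazy_pow_mulVec_apply_le (hP : P ∈ rowStochastic ℝ V) {e : V → ℝ} (he : 0 ≤ e) {κ : ℝ}
    (hPe : ∀ x, (P *ᵥ e) x ≤ κ) (d : ℕ) (x : V) :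
    (((2 : ℝ)⁻¹ • (1 + P)) ^ d *ᵥ e) x ≤ (2⁻¹) ^ d * e x + κ := by
  have hP0 : ∀ i j, 0 ≤ P i j := fun i j => nonneg_of_mem_rowStochastic hP
  have hQ := lazy_mem_rowStochastic hP
  induction d generalizing x with
  | zero => simpa using (mulVec_nonneg hP0 he x).trans (hPe x)
  | succ d ih =>
    have hPκ : (((2 : ℝ)⁻¹ • (1 + P)) ^ d *ᵥ (P *ᵥ e)) x ≤ κ :=
      calc (((2 : ℝ)⁻¹ • (1 + P)) ^ d *ᵥ (P *ᵥ e)) x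
          ≤ (((2 : ℝ)⁻¹ • (1 + P)) ^ d *ᵥ (κ • 1)) x :=
            mulVec_le_mulVec_of_le (pow_apply_nonneg (fun i j => nonneg_of_mem_rowStochastic hQ) d)
              (fun _ _ => le_rfl) (mulVec_nonneg hP0 he) (fun z => by simpa using hPe z) x
        _ = κ := by rw [mulVec_smul, one_vecMul_of_mem_rowStochastic (pow_mem hQ d)]; simp
    rw [pow_succ, ← mulVec_mulVec, smul_mulVec, add_mulVec, one_mulVec, mulVec_smul, mulVec_add]
    have := ih x
    simp only [Pi.smul_apply, Pi.add_apply, smul_eq_mul, pow_succ]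
    linarith

lemma sum_lazy_pow_mulVec_apply_le (hP : P ∈ rowStochastic ℝ V) {e : V → ℝ} (he : 0 ≤ e)
    {κ : ℝ} (hPe : ∀ x, (P *ᵥ e) x ≤ κ) (m : ℕ) (x : V) :
    (∑ d ∈ range (m + 1), ((2 : ℝ)⁻¹ • (1 + P)) ^ d *ᵥ e) x ≤ 2 * e x + (m + 1) * κ := by
  have hgeom : ∑ d ∈ range (m + 1), (2⁻¹ : ℝ) ^ d ≤ 2 := by
    simpa [one_div] using sum_geometric_two_le (m + 1)
  rw [Finset.sum_apply]
  calc _ ≤ ∑ d ∈ range (m + 1), ((2⁻¹ : ℝ) ^ d * e x + κ) :=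
        sum_le_sum fun d _ => lazy_pow_mulVec_apply_le hP he hPe d x
    _ = (∑ d ∈ range (m + 1), (2⁻¹ : ℝ) ^ d) * e x + (m + 1) * κ := by
        rw [sum_add_distrib, sum_mul]; simp
    _ ≤ 2 * e x + (m + 1) * κ := by gcongr; exact he x

lemma mulVec_indicatorVec_apply_le {c : ℝ} (hc : ∀ i j, P i j ≤ c) (W : Finset V) (x : V) :
    (P *ᵥ indicatorVec W) x ≤ W.card * c := by
  simp only [mulVec, dotProduct, indicatorVec, mul_ite, mul_one, mul_zero, sum_ite_mem,
    univ_inter]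
  simpa using sum_le_card_nsmul W (P x) c fun j _ => hc x j

end Lazy

section Mixing

variable {Q : Matrix V V ℝ} {π μ : V → ℝ}

/-- Doeblin's contraction; for `α = 0` it is the monotonicity of the distance along the chain. -/
lemma dTV_vecMul_le (hQ : Q ∈ rowStochastic ℝ V) (hπQ : π ᵥ* Q = π) (hπ1 : ∑ w, π w = 1)
    (hμ1 : ∑ w, μ w = 1) {α : ℝ} (hα : ∀ u w, α * π w ≤ Q u w) :
    dTV (μ ᵥ* Q) π ≤ (1 - α) * dTV μ π := by
  set T := Q - α • vecMulVec 1 π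
  have hT0 : ∀ u w, 0 ≤ T u w := fun u w => by
    simpa [T, vecMulVec_apply] using hα u w
  have hT1 : ∀ u, ∑ w, T u w ≤ 1 - α := fun u => by
    simp [T, sum_sub_distrib, ← mul_sum, hπ1, sum_row_of_mem_rowStochastic hQ u]
  have hdiff : μ ᵥ* Q - π = (μ - π) ᵥ* T := by
    have h0 : (μ - π) ⬝ᵥ 1 = 0 := by simp [dotProduct_one, sum_sub_distrib, hμ1, hπ1]
    rw [vecMul_sub, vecMul_smul, vecMul_vecMulVec, h0, zero_smul, smul_zero, sub_zero,
      sub_vecMul, hπQ]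
  unfold dTV
  rw [mul_div_assoc']
  gcongr
  have := sum_abs_vecMul_le hT0 hT1 (μ - π)
  rwa [← hdiff] at this

lemma exists_dTV_pow_lt (hQ : Q ∈ rowStochastic ℝ V) (hπ0 : 0 ≤ π) (hπQ : π ᵥ* Q = π)
    (hπ1 : ∑ w, π w = 1) {r : ℕ} (hr : ∀ u w, 0 < (Q ^ r) u w) (v : V) {ε : ℝ} (hε : 0 < ε) :
    ∃ t, dTV ((Q ^ t) v) π < ε := by
  have : Nonempty V := ⟨v⟩
  obtain ⟨p, -, hp⟩ := exists_min_image univ (fun p : V × V => (Q ^ r) p.1 p.2) univ_nonempty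
  set α := (Q ^ r) p.1 p.2
  have hα : ∀ u w, α * π w ≤ (Q ^ r) u w := fun u w =>
    calc α * π w ≤ α * 1 := mul_le_mul_of_nonneg_left
          (hπ1 ▸ single_le_sum (fun w _ => hπ0 w) (mem_univ w)) (hr _ _).le
      _ ≤ (Q ^ r) u w := by simpa using hp (u, w) (mem_univ _)
  have hα1 : 0 ≤ 1 - α := sub_nonneg.mpr (le_one_of_mem_rowStochastic (pow_mem hQ r))
  set C := dTV ((Q ^ 0) v) π
  have hiter : ∀ k, dTV ((Q ^ (r * k)) v) π ≤ (1 - α) ^ k * C := by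
    intro k
    induction k with
    | zero => simp [C]
    | succ k ih =>
      rw [Nat.mul_succ, pow_add, mul_apply_eq_vecMul]
      calc _ ≤ (1 - α) * dTV ((Q ^ (r * k)) v) π :=
            dTV_vecMul_le (pow_mem hQ r) (vecMul_pow_eq_self hπQ r) hπ1
              (sum_row_of_mem_rowStochastic (pow_mem hQ _) v) hα
        _ ≤ (1 - α) * ((1 - α) ^ k * C) := mul_le_mul_of_nonneg_left ih hα1
        _ = (1 - α) ^ (k + 1) * C := by ring
  have hC : 0 < C + 1 := by linarith [dTV_nonneg ((Q ^ 0) v) π]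
  obtain ⟨k, hk⟩ := exists_pow_lt_of_lt_one (div_pos hε hC) (by linarith [hr p.1 p.2] : 1 - α < 1)
  refine ⟨r * k, (hiter k).trans_lt ?_⟩
  calc (1 - α) ^ k * C ≤ (1 - α) ^ k * (C + 1) := by gcongr; linarith
    _ < ε / (C + 1) * (C + 1) := by gcongr
    _ = ε := div_mul_cancel₀ ε hC.ne'

lemma pow_apply_pos_of_walk {A : Matrix V V ℝ} {G : SimpleGraph V} (hA : ∀ i j, 0 ≤ A i j)
    (hdiag : ∀ u, 0 < A u u) (hadj : ∀ u w, G.Adj u w → 0 < A u w) :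
    ∀ (j : ℕ) {u w : V} (p : G.Walk u w), p.length ≤ j → 0 < (A ^ j) u w := by
  intro j
  induction j with
  | zero =>
    intro u w p hp
    obtain rfl := p.eq_of_length_eq_zero (Nat.le_zero.mp hp)
    simp
  | succ j ih =>
    intro u w p hp
    rw [pow_succ', mul_apply]
    refine sum_pos' (fun x _ => mul_nonneg (hA u x) (pow_apply_nonneg hA j x w)) ?_
    cases p with
    | nil => exact ⟨u, mem_univ u, mul_pos (hdiag u) (ih SimpleGraph.Walk.nil (Nat.zero_le j))⟩
    | cons h q => exact ⟨_, mem_univ _, mul_pos (hadj _ _ h) (ih q (by simpa using hp))⟩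

end Mixing

section LazyWalk

variable {G : SimpleGraph V}

lemma transMat_mem_rowStochastic (hd : ∀ v, 0 < deg G v) : transMat G ∈ rowStochastic ℝ V := by
  refine mem_rowStochastic_iff_sum.mpr ⟨fun v u => ?_, fun v => ?_⟩
  · unfold transMat; split_ifs <;> positivity
  · have : (deg G v : ℝ) ≠ 0 := by exact_mod_cast (hd v).ne'
    simp only [transMat]
    rw [← sum_filter, sum_const, ← deg_eq_card_filter, nsmul_eq_mul, mul_inv_cancel₀ this]

lemma lazyMat_mem_rowStochastic (hd : ∀ v, 0 < deg G v) : lazyMat G ∈ rowStochastic ℝ V :=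
  lazy_mem_rowStochastic (transMat_mem_rowStochastic hd)

lemma statDist_vecMul_lazyMat (hd : ∀ v, 0 < deg G v) :
    statDist G ᵥ* lazyMat G = statDist G := by
  rw [lazyMat, vecMul_smul, vecMul_add, vecMul_one, statDist_vecMul_transMat hd, ← two_smul ℝ,
    smul_smul]
  norm_num

lemma lazyMat_pow_apply_pos (hconn : G.Connected) (hd : ∀ v, 0 < deg G v) (u w : V) :
    0 < (lazyMat G ^ (Fintype.card V - 1)) u w := by
  obtain ⟨p⟩ := hconn.preconnected u w
  refine pow_apply_pos_of_walk
    (fun i j => nonneg_of_mem_rowStochastic (lazyMat_mem_rowStochastic hd))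
    (fun x => ?_) (fun x y h => ?_) _ p.bypass ?_
  · have : 0 ≤ transMat G x x := nonneg_of_mem_rowStochastic (transMat_mem_rowStochastic hd)
    simp only [lazyMat, Matrix.smul_apply, Matrix.add_apply, one_apply_eq, smul_eq_mul]
    positivity
  · have := hd x
    simp only [lazyMat, transMat, Matrix.smul_apply, Matrix.add_apply,
      one_apply_ne (G.ne_of_adj h), if_pos h, smul_eq_mul, zero_add]
    positivity
  · have := p.bypass_isPath.length_lt; omega

lemma dTV_lazyMat_pow_tmix_lt (hconn : G.Connected) (hd : ∀ v, 0 < deg G v) {ε : ℝ}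
    (hε : 0 < ε) (v : V) : dTV ((lazyMat G ^ tmix G ε) v) (statDist G) < ε := by
  have hQ := lazyMat_mem_rowStochastic hd
  have : Nonempty V := ⟨v⟩
  have hne : {t : ℕ | dTV ((lazyMat G ^ t) v) (statDist G) < ε}.Nonempty :=
    exists_dTV_pow_lt hQ statDist_nonneg (statDist_vecMul_lazyMat hd) (sum_statDist hd)
      (lazyMat_pow_apply_pos hconn hd) v hε
  have hanti : Antitone fun t => dTV ((lazyMat G ^ t) v) (statDist G) :=
    antitone_nat_of_succ_le fun t => by
      rw [pow_succ, mul_apply_eq_vecMul]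
      simpa using dTV_vecMul_le hQ (statDist_vecMul_lazyMat hd) (sum_statDist hd)
        (sum_row_of_mem_rowStochastic (pow_mem hQ t) v) (α := 0)
        (fun u w => by simpa using nonneg_of_mem_rowStochastic hQ)
  exact (hanti (le_sup (f := fun v => sInf {t : ℕ | dTV ((lazyMat G ^ t) v) (statDist G) < ε})
    (mem_univ v))).trans_lt (Nat.sInf_mem hne)

lemma killedMat_eq (G : SimpleGraph V) (U : Finset V) :
    killedMat G U = avoidProj U * transMat G * avoidProj U := by
  ext u w
  simp only [killedMat, avoidProj, diagonal_mul, mul_diagonal, indicatorVec, mem_compl]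
  split_ifs <;> simp_all

lemma avoidProb_eq_avoidVec (G : SimpleGraph V) (U : Finset V) (v : V) (T : ℕ) :
    avoidProb G U v T = avoidVec (transMat G) U T v := by
  have hcomm : SemiconjBy (avoidProj U) (killedMat G U) (avoidProj U * transMat G) := by
    simp only [SemiconjBy, killedMat_eq, ← mul_assoc, avoidProj_mul_self]
  have h := congrArg (· *ᵥ (1 : V → ℝ)) (hcomm.pow_right T).eq
  simp only [← mulVec_mulVec, avoidProj_mulVec_one] at h
  rw [avoidVec, ← h, avoidProb, avoidProj, mulVec_diagonal, indicatorVec]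
  split_ifs <;> simp_all [mulVec, dotProduct]
  -- `avoidProb` takes the matrix power with the classical `DecidableEq V` instance
  convert rfl

end LazyWalk

section Hitting

variable {G : SimpleGraph V} {δ : ℝ} {W : Finset V} {m : ℕ}

/-- At most `2` visits before the first move, and at most `|W| / (δ n)` per later step. -/
lemma sum_lazyMat_pow_mulVec_apply_le (hδ : 0 < δ) (hdeg : ∀ v, δ * Fintype.card V ≤ deg G v)
    (x : V) : (∑ d ∈ range (m + 1), lazyMat G ^ d *ᵥ indicatorVec W) x ≤
      2 * indicatorVec W x + (m + 1) * (W.card * (δ * Fintype.card V)⁻¹) := by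
  have : Nonempty V := ⟨x⟩
  have hn : (0 : ℝ) < Fintype.card V := by exact_mod_cast Fintype.card_pos
  refine sum_lazy_pow_mulVec_apply_le (transMat_mem_rowStochastic (deg_pos hδ hdeg))
    (indicatorVec_nonneg W) (mulVec_indicatorVec_apply_le (fun u w => ?_) W) m x
  unfold transMat; split_ifs
  exacts [inv_anti₀ (by positivity) (hdeg u), by positivity]

/-- Off `W` the hitting probability is at most `η` and on `W` at most `1`: this is what the terms
`π(W) + η τ` pay for starting from `μ` instead of `π`. -/
lemma mul_dotProduct_indicatorVec_le_lazy [Nonempty V] (hδ : 0 < δ)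
    (hdeg : ∀ v, δ * Fintype.card V ≤ deg G v) {η : ℝ}
    (hη : (m + 1) * (W.card * (δ * Fintype.card V)⁻¹) ≤ η) {μ : V → ℝ} (hμ0 : 0 ≤ μ) {τ : ℝ}
    (hτ : ∑ w, |μ w - statDist G w| ≤ τ) :
    (m + 1) * (statDist G ⬝ᵥ indicatorVec W) ≤ (2 + η) *
      (μ ⬝ᵥ (1 - avoidVec (lazyMat G) W m) + statDist G ⬝ᵥ indicatorVec W + η * τ) := by
  have hd := deg_pos hδ hdeg
  have hQ := lazyMat_mem_rowStochastic hd
  have hη0 : 0 ≤ η := le_trans (by positivity) hη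
  have hG : ∀ x, (∑ d ∈ range (m + 1), lazyMat G ^ d *ᵥ indicatorVec W) x ≤
      2 * indicatorVec W x + η := fun x => by
    linarith [sum_lazyMat_pow_mulVec_apply_le (W := W) (m := m) hδ hdeg x]
  have hvisits := mul_dotProduct_indicatorVec_le (W := W) (m := m) (B := 2 + η) hQ statDist_nonneg
    (statDist_vecMul_lazyMat hd) fun x hx => by
      have := hG x; rwa [indicatorVec, if_pos hx, mul_one] at this
  have hoff : ∀ w ∉ W, (1 - avoidVec (lazyMat G) W m) w ≤ η := fun w hw => by
    have := (one_sub_avoidVec_le_sum hQ m w).trans (hG w)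
    rwa [indicatorVec, if_neg hw, mul_zero, zero_add] at this
  have hcomp := dotProduct_le_dotProduct_add_of_le_off (statDist_nonneg (G := G)) hμ0
    (sub_nonneg.mpr (avoidVec_le_one hQ m)) (sub_le_self _ (avoidVec_nonneg hQ.1 m)) hη0 hoff
  calc _ ≤ (2 + η) * (statDist G ⬝ᵥ (1 - avoidVec (lazyMat G) W m)) := hvisits
    _ ≤ _ := by gcongr; linarith [mul_le_mul_of_nonneg_left hτ hη0]

section Sizes

variable [Nonempty V] {ε : ℝ}

lemma le_nat_sqrt_add_one_mul_statDist_dotProduct (hδ : 0 < δ) (hε : 0 < ε)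
    (hdeg : ∀ v, δ * Fintype.card V ≤ deg G v) (hW : W.card = ⌈ε * √(Fintype.card V)⌉₊) :
    ε * δ ≤ (Nat.sqrt (Fintype.card V) + 1) * (statDist G ⬝ᵥ indicatorVec W) := by
  set s := √(Fintype.card V : ℝ)
  have hss : s * s = Fintype.card V := Real.mul_self_sqrt (Nat.cast_nonneg _)
  have hs0 : 0 < s := Real.sqrt_pos.mpr (Nat.cast_pos.mpr Fintype.card_pos)
  calc ε * δ = s * (ε * s * (δ / (s * s))) := by field_simp
    _ ≤ (Nat.sqrt (Fintype.card V) + 1) * (W.card * (δ / Fintype.card V)) := by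
        rw [hss, hW]
        gcongr
        exacts [Real.real_sqrt_le_nat_sqrt_succ, Nat.le_ceil _]
    _ ≤ _ := by
        rw [dotProduct_indicatorVec]
        gcongr
        simpa using card_nsmul_le_sum W _ _ fun w _ => le_statDist hδ hdeg w

lemma statDist_dotProduct_indicatorVec_le (hδ : 0 < δ) (hε : 0 < ε)
    (hn : ε⁻¹ ^ 2 ≤ (Fintype.card V : ℝ))
    (hdeg : ∀ v, δ * Fintype.card V ≤ deg G v) (hW : W.card = ⌈ε * √(Fintype.card V)⌉₊) :
    statDist G ⬝ᵥ indicatorVec W ≤ 2 * ε ^ 2 / δ := by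
  set s := √(Fintype.card V : ℝ)
  have hss : s * s = Fintype.card V := Real.mul_self_sqrt (Nat.cast_nonneg _)
  have hεs : 1 ≤ ε * s := one_le_mul_sqrt hε hn
  have hs0 : 0 < s := Real.sqrt_pos.mpr (Nat.cast_pos.mpr Fintype.card_pos)
  calc statDist G ⬝ᵥ indicatorVec W ≤ W.card * (δ * Fintype.card V)⁻¹ := by
        simpa [dotProduct_indicatorVec] using
          sum_le_card_nsmul W _ _ fun w _ => statDist_le hδ hdeg w
    _ ≤ 2 * (ε * s) * (δ * (s * s))⁻¹ := by
        rw [hss, hW]; gcongr; exact Nat.ceil_le_two_mul (by linarith)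
    _ = 2 * ε / (δ * s) := by field_simp
    _ ≤ 2 * ε ^ 2 / δ := by
        rw [div_le_div_iff₀ (by positivity) hδ]
        nlinarith [mul_le_mul_of_nonneg_left hεs (by positivity : 0 ≤ 2 * ε * δ)]

end Sizes

lemma le_lazyMat_pow_mulVec_one_sub_avoidVec (hconn : G.Connected) (hδ : 0 < δ) {ε : ℝ}
    (hε : 0 < ε) (hεδ : ε ≤ δ / 4) (hεδ2 : ε ≤ δ ^ 2 / 72)
    (hn : ε⁻¹ ^ 2 ≤ (Fintype.card V : ℝ)) (hdeg : ∀ v, δ * Fintype.card V ≤ deg G v)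
    (hW : W.card = ⌈ε * √(Fintype.card V)⌉₊) (v : V) :
    ε * δ / 4 ≤ (lazyMat G ^ tmix G (ε / 2) *ᵥ
      (1 - avoidVec (lazyMat G) W (Nat.sqrt (Fintype.card V)))) v := by
  have : Nonempty V := ⟨v⟩
  have hd := deg_pos hδ hdeg
  have hmix : ∑ w, |(lazyMat G ^ tmix G (ε / 2)) v w - statDist G w| ≤ ε := by
    have := dTV_lazyMat_pow_tmix_lt hconn hd (half_pos hε) v
    unfold dTV at this; linarith
  have hhit := (le_nat_sqrt_add_one_mul_statDist_dotProduct hδ hε hdeg hW).trans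
    (mul_dotProduct_indicatorVec_le_lazy hδ hdeg (nat_sqrt_add_one_mul_le hδ hε hn hW)
      (fun w => pow_apply_nonneg (lazyMat_mem_rowStochastic hd).1 _ v w) hmix)
  have hpos := pos_of_mul_pos_right ((by positivity : 0 < ε * δ).trans_le hhit) (by positivity)
  have h3 : 2 + 4 * ε / δ ≤ 3 := by linarith [(div_le_one hδ).mpr (by linarith : 4 * ε ≤ δ)]
  have hsmall : 2 * ε ^ 2 / δ + 4 * ε / δ * ε ≤ ε * δ / 12 := by
    rw [show 2 * ε ^ 2 / δ + 4 * ε / δ * ε = 6 * ε ^ 2 / δ by ring, div_le_iff₀ hδ]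
    nlinarith
  have h3X := hhit.trans (mul_le_mul_of_nonneg_right h3 hpos.le)
  have hπW := statDist_dotProduct_indicatorVec_le hδ hε hn hdeg hW
  change ε * δ / 4 ≤ (lazyMat G ^ tmix G (ε / 2)) v ⬝ᵥ
    (1 - avoidVec (lazyMat G) W (Nat.sqrt (Fintype.card V)))
  linarith

end Hitting

/-- **Claim 3.3.**  For any `δ > 0` there is `c = c(δ) > 0` such that for any
`ε ∈ (0,c)`, any connected simple graph `G` on `n ≥ ε⁻²` vertices with minimal degree at
least `δn`, any `U ⊆ V` with `|U| ≥ ε√n` and any vertex `v`, the probability that the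
simple random walk started at `v` avoids `U` for `2(t_mix(ε/2) + ⌊√n⌋)` steps is at most
`1 - εδ/4`. -/
theorem hit_large_set (δ : ℝ) (hδ : 0 < δ) :
    ∃ c : ℝ, 0 < c ∧
      ∀ (V : Type) [Fintype V] [DecidableEq V] (G : SimpleGraph V), G.Connected →
        ∀ ε : ℝ, ε ∈ Set.Ioo (0 : ℝ) c →
          (ε⁻¹ ^ 2 ≤ (Fintype.card V : ℝ)) →
          (∀ v : V, δ * (Fintype.card V : ℝ) ≤ (deg G v : ℝ)) →
          ∀ U : Finset V, ε * Real.sqrt (Fintype.card V) ≤ (U.card : ℝ) →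
          ∀ v : V,
            avoidProb G U v (2 * (tmix G (ε / 2) + Nat.sqrt (Fintype.card V))) ≤
              1 - ε * δ / 4 := by
  refine ⟨min (δ ^ 2 / 72) (δ / 4), by positivity, ?_⟩
  intro V _ _ G hconn ε ⟨hε, hεc⟩ hn hdeg U hU v
  have : Nonempty V := ⟨v⟩
  set t := tmix G (ε / 2)
  set m := Nat.sqrt (Fintype.card V)
  obtain ⟨W, hWU, hW⟩ := exists_subset_card_eq (Nat.ceil_le.mpr hU)
  have hP := transMat_mem_rowStochastic (deg_pos hδ hdeg)
  have hQ := lazyMat_mem_rowStochastic (deg_pos hδ hdeg)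
  calc avoidProb G U v (2 * (t + m)) = avoidVec (transMat G) U (2 * (t + m)) v :=
        avoidProb_eq_avoidVec G U v _
    _ ≤ avoidVec (transMat G) W (2 * (t + m)) v := avoidVec_le_of_subset hP.1 hWU _ v
    _ ≤ avoidVec (transMat G) W (t + m) v := avoidVec_antitone hP (by omega) v
    _ ≤ avoidVec (lazyMat G) W (t + m) v := avoidVec_le_avoidVec_lazy hP _ v
    _ ≤ (lazyMat G ^ t *ᵥ avoidVec (lazyMat G) W m) v := avoidVec_add_le hQ.1 t m v
    _ = 1 - (lazyMat G ^ t *ᵥ (1 - avoidVec (lazyMat G) W m)) v := by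
        rw [mulVec_sub, one_vecMul_of_mem_rowStochastic (pow_mem hQ t)]; simp
    _ ≤ 1 - ε * δ / 4 := by
        gcongr
        exact le_lazyMat_pow_mulVec_one_sub_avoidVec hconn hδ hε
          (hεc.trans_le (min_le_right _ _)).le (hεc.trans_le (min_le_left _ _)).le hn hdeg hW v

end Paper
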